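/- If G is a finite simple graph on n ≥ 3 vertices containing a vertex of degree 1, then m(G) ≤ 2·ℓ(n − 2). -/

import Mathlib

/-- `ProdOfSum n m` holds if `m` can be written as the product of a nonempty list of
positive integers whose sum is `n`. -/
def ProdOfSum (n m : ℕ) : Prop :=
  ∃ l : List ℕ, l ≠ [] ∧ (∀ a ∈ l, 0 < a) ∧ l.sum = n ∧ l.prod = m

/-- `ell n` is the largest integer expressible as a product of positive integers summing to `n`. -/
noncomputable def ell (n : ℕ) : ℕ := sSup {m | ProdOfSum n m}

/-- `I` is a maximal independent set (MIS) of `G`: it is independent, and it is not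
properly contained in any other independent set. -/
def IsMaxIndepSet {V : Type*} (G : SimpleGraph V) (I : Set V) : Prop :=
  (∀ x ∈ I, ∀ y ∈ I, ¬ G.Adj x y) ∧
  ∀ J : Set V, (∀ x ∈ J, ∀ y ∈ J, ¬ G.Adj x y) → I ⊆ J → J = I

/-- The number of maximal independent sets of `G`. -/
noncomputable def misCount {V : Type*} (G : SimpleGraph V) : ℕ :=
  Nat.card {I : Set V // IsMaxIndepSet G I}


section Ell


lemma list_prod_le_two_pow_sum (l : List ℕ) : l.prod ≤ 2 ^ l.sum := by
  induction l with
  | nil => simp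
  | cons a t ih =>
    simp only [List.prod_cons, List.sum_cons, pow_add]
    exact Nat.mul_le_mul (Nat.lt_two_pow_self (n := a)).le ih

lemma bddAbove_prodOfSum (n : ℕ) : BddAbove {m | ProdOfSum n m} := by
  refine ⟨2 ^ n, fun m hm => ?_⟩
  obtain ⟨l, -, -, hs, hp⟩ := hm
  rw [← hp, ← hs]; exact list_prod_le_two_pow_sum l

lemma le_ell {n m : ℕ} (h : ProdOfSum n m) : m ≤ ell n :=
  le_csSup (bddAbove_prodOfSum n) h

lemma prodOfSum_self {n : ℕ} (hn : 1 ≤ n) : ProdOfSum n n :=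
  ⟨[n], by simp, by simpa using Nat.pos_of_ne_zero (Nat.one_le_iff_ne_zero.mp hn), by simp, by simp⟩

lemma ell_ge_self {n : ℕ} (hn : 1 ≤ n) : n ≤ ell n := le_ell (prodOfSum_self hn)

lemma prodOfSum_ell {n : ℕ} (hn : 1 ≤ n) : ProdOfSum n (ell n) :=
  Nat.sSup_mem ⟨n, by exact prodOfSum_self hn⟩ (bddAbove_prodOfSum n)

lemma ell_le_ell_succ (n : ℕ) : ell n ≤ ell (n + 1) := by
  rcases Nat.eq_zero_or_pos n with h | h
  · subst h
    have : {m | ProdOfSum 0 m} = ∅ := by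
      ext m; simp only [Set.mem_setOf_eq, Set.mem_empty_iff_false, iff_false]
      rintro ⟨l, hne, hpos, hs, -⟩
      rcases l with _ | ⟨a, t⟩
      · exact hne rfl
      · have := hpos a (by simp)
        simp only [List.sum_cons] at hs; omega
    simp [ell, this]
  · obtain ⟨l, hne, hpos, hs, hp⟩ := prodOfSum_ell h
    refine le_ell ⟨1 :: l, by simp, ?_, by simp [hs, Nat.add_comm], by simp [hp]⟩
    intro a ha
    rcases List.mem_cons.1 ha with rfl | ha
    · norm_num
    · exact hpos a ha

/-- patched `ell`: value `1` at `0` so that it bounds MIS counts. -/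
noncomputable def ellF (n : ℕ) : ℕ := if n = 0 then 1 else ell n

lemma ellF_mono : Monotone ellF := by
  apply monotone_nat_of_le_succ
  intro n
  rcases Nat.eq_zero_or_pos n with rfl | h
  · simpa [ellF] using ell_ge_self (le_refl 1)
  · simp only [ellF, if_neg h.ne', if_neg (Nat.succ_ne_zero n)]
    exact ell_le_ell_succ n

lemma ellF_pos (n : ℕ) : 1 ≤ ellF n := by
  rcases Nat.eq_zero_or_pos n with rfl | h
  · simp [ellF]
  · simp only [ellF, if_neg h.ne']
    exact le_trans h (ell_ge_self h)

lemma mul_ellF_le {n d : ℕ} (hn : 1 ≤ n) (hd : d + 1 ≤ n) :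
    (d + 1) * ellF (n - d - 1) ≤ ell n := by
  rcases Nat.eq_zero_or_pos (n - d - 1) with h | h
  · have h1 : d + 1 = n := by omega
    rw [h, h1]
    simpa [ellF] using ell_ge_self hn
  · simp only [ellF, if_neg h.ne']
    obtain ⟨l, hne, hpos, hs, hp⟩ := prodOfSum_ell h
    refine le_ell ⟨(d + 1) :: l, by simp, ?_, by simp [hs]; omega, by simp [hp]⟩
    intro a ha
    rcases List.mem_cons.1 ha with rfl | ha
    · omega
    · exact hpos a ha
end Ell
section Graph


def NB {V : Type*} (G : SimpleGraph V) (u : V) : Set V := insert u (G.neighborSet u)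

variable {V : Type*}

lemma exists_mem_NB {G : SimpleGraph V} {I : Set V} (hI : IsMaxIndepSet G I) (v : V) :
    ∃ u, u ∈ NB G v ∧ u ∈ I := by
  by_contra h
  push_neg at h
  have hvI : v ∉ I := fun hv => h v (Set.mem_insert _ _) hv
  have hind : ∀ x ∈ insert v I, ∀ y ∈ insert v I, ¬ G.Adj x y := by
    rintro x (rfl | hx) y (rfl | hy) hadj
    · exact G.irrefl hadj
    · exact h y (Set.mem_insert_of_mem _ hadj) hy
    · exact h x (Set.mem_insert_of_mem _ (G.adj_symm hadj)) hx
    · exact hI.1 x hx y hy hadj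
  have heq := hI.2 (insert v I) hind (Set.subset_insert _ _)
  exact hvI (heq ▸ Set.mem_insert v I)

lemma inter_compl_NB {G : SimpleGraph V} {I : Set V}
    (hind : ∀ x ∈ I, ∀ y ∈ I, ¬ G.Adj x y) {u : V} (hu : u ∈ I) :
    I ∩ (NB G u)ᶜ = I \ {u} := by
  ext x
  simp only [Set.mem_inter_iff, Set.mem_compl_iff, Set.mem_diff, Set.mem_singleton_iff, NB,
    Set.mem_insert_iff, SimpleGraph.mem_neighborSet]
  constructor
  · rintro ⟨hx, hnb⟩
    exact ⟨hx, fun hxu => hnb (Or.inl hxu)⟩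
  · rintro ⟨hx, hxu⟩
    exact ⟨hx, fun hmem => hmem.elim hxu (fun hadj => hind u hu x hx hadj)⟩

lemma isMaxIndepSet_preimage {G : SimpleGraph V} {I : Set V} (hI : IsMaxIndepSet G I)
    {u : V} (hu : u ∈ I) :
    IsMaxIndepSet (SimpleGraph.induce ((NB G u)ᶜ : Set V) G) (Subtype.val ⁻¹' I) := by
  constructor
  · intro x hx y hy hadj
    exact hI.1 x hx y hy hadj
  · intro J hJ hsub
    set K : Set V := Subtype.val '' J ∪ {u} with hKdef
    have hKind : ∀ x ∈ K, ∀ y ∈ K, ¬ G.Adj x y := by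
      rintro x (⟨a, ha, rfl⟩ | hx) y (⟨b, hb, rfl⟩ | hy) hadj
      · exact hJ a ha b hb hadj
      · rw [Set.mem_singleton_iff] at hy; subst hy
        exact a.2 (Set.mem_insert_of_mem _ (G.adj_symm hadj))
      · rw [Set.mem_singleton_iff] at hx; subst hx
        exact b.2 (Set.mem_insert_of_mem _ hadj)
      · rw [Set.mem_singleton_iff] at hx hy; subst hx; subst hy; exact G.irrefl hadj
    have hIK : I ⊆ K := by
      intro x hx
      by_cases hxu : x = u
      · exact Or.inr (by simp [hxu])
      · have hxc : x ∈ (NB G u)ᶜ := by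
          have : x ∈ I ∩ (NB G u)ᶜ := by
            rw [inter_compl_NB hI.1 hu]; exact ⟨hx, hxu⟩
          exact this.2
        exact Or.inl ⟨⟨x, hxc⟩, hsub hx, rfl⟩
    have hK : K = I := hI.2 K hKind hIK
    refine Set.Subset.antisymm ?_ hsub
    intro a ha
    have : (a : V) ∈ K := Or.inl ⟨a, ha, rfl⟩
    rw [hK] at this
    exact this

lemma nat_card_sigma_le {ι : Type*} [Finite ι] (β : ι → Type*) [∀ i, Finite (β i)] {B : ℕ}
    (h : ∀ i, Nat.card (β i) ≤ B) : Nat.card (Σ i, β i) ≤ Nat.card ι * B := by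
  classical
  cases nonempty_fintype ι
  haveI : ∀ i, Fintype (β i) := fun i => Fintype.ofFinite (β i)
  simp only [Nat.card_eq_fintype_card, Fintype.card_sigma]
  calc ∑ i, Fintype.card (β i) ≤ ∑ _i : ι, B :=
        Finset.sum_le_sum (fun i _ => by rw [← Nat.card_eq_fintype_card]; exact h i)
    _ = Fintype.card ι * B := by rw [Finset.sum_const, Finset.card_univ, smul_eq_mul]

lemma misCount_le_mul [Fintype V] (G : SimpleGraph V) (v : V) (B : ℕ)
    (hB : ∀ u : V, u ∈ NB G v → misCount (SimpleGraph.induce ((NB G u)ᶜ : Set V) G) ≤ B) :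
    misCount G ≤ (NB G v).ncard * B := by
  classical
  set σ : Type _ := Σ u : (NB G v), {J : Set ((NB G (u : V))ᶜ : Set V) //
      IsMaxIndepSet (SimpleGraph.induce ((NB G (u : V))ᶜ : Set V) G) J} with hσ
  have hchoice : ∀ I : {I : Set V // IsMaxIndepSet G I},
      ∃ u : (NB G v), (u : V) ∈ I.1 := by
    intro I
    obtain ⟨u, hu1, hu2⟩ := exists_mem_NB I.2 v
    exact ⟨⟨u, hu1⟩, hu2⟩
  choose f hf using hchoice
  set F : {I : Set V // IsMaxIndepSet G I} → σ :=
    fun I => ⟨f I, ⟨Subtype.val ⁻¹' I.1, isMaxIndepSet_preimage I.2 (hf I)⟩⟩ with hF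
  have hrec : ∀ I : {I : Set V // IsMaxIndepSet G I},
      I.1 = Subtype.val '' ((F I).2.1 : Set _) ∪ {((F I).1 : V)} := by
    intro I
    have h1 : Subtype.val '' (Subtype.val ⁻¹' I.1 : Set ((NB G ((f I : V)))ᶜ : Set V))
        = I.1 ∩ (NB G (f I : V))ᶜ := by rw [Subtype.image_preimage_coe, Set.inter_comm]
    rw [hF]
    simp only
    rw [h1, inter_compl_NB I.2.1 (hf I), Set.diff_union_of_subset]
    simpa using hf I
  have hinj : Function.Injective F := by
    intro I1 I2 h
    apply Subtype.ext
    rw [hrec I1, hrec I2, h]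
  have hle : Nat.card {I : Set V // IsMaxIndepSet G I} ≤ Nat.card σ :=
    Nat.card_le_card_of_injective F hinj
  have hσle : Nat.card σ ≤ Nat.card (NB G v) * B := by
    apply nat_card_sigma_le
    intro u
    exact hB u u.2
  calc misCount G ≤ Nat.card σ := hle
    _ ≤ Nat.card (NB G v) * B := hσle
    _ = (NB G v).ncard * B := by rw [Nat.card_coe_set_eq]

lemma moonMoser : ∀ (n : ℕ), ∀ {V : Type*} [Fintype V] (G : SimpleGraph V),
    Fintype.card V = n → misCount G ≤ ellF n := by
  intro n
  induction n using Nat.strong_induction_on with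
  | _ n IH =>
    intro V _ G hn
    rcases Nat.eq_zero_or_pos n with rfl | hpos
    · haveI : IsEmpty V := Fintype.card_eq_zero_iff.1 hn
      have hsub : Subsingleton {I : Set V // IsMaxIndepSet G I} := by
        constructor
        intro I J
        apply Subtype.ext
        ext x
        exact (IsEmpty.false x).elim
      have h1 : misCount G ≤ 1 := Finite.card_le_one_iff_subsingleton.2 hsub
      simpa [ellF] using h1
    · haveI : Nonempty V := Fintype.card_pos_iff.1 (hn ▸ hpos)
      obtain ⟨v, -, hmin⟩ := Finset.exists_min_image Finset.univ
        (fun u => (G.neighborSet u).ncard) ⟨Classical.arbitrary V, Finset.mem_univ _⟩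
      set d := (G.neighborSet v).ncard with hd
      have hNBcard : ∀ u : V, (NB G u).ncard = (G.neighborSet u).ncard + 1 := by
        intro u
        rw [NB, Set.ncard_insert_of_notMem (by simp) (Set.toFinite _)]
      have hcompl : ∀ u : V, Nat.card ((NB G u)ᶜ : Set V) = n - ((G.neighborSet u).ncard + 1) := by
        intro u
        have h1 := Set.ncard_add_ncard_compl (NB G u)
        rw [hNBcard u, Nat.card_eq_fintype_card, hn] at h1
        rw [Nat.card_coe_set_eq]
        omega
      have hdn : d + 1 ≤ n := by
        have h1 : (NB G v).ncard ≤ n := by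
          rw [← hn, ← Nat.card_eq_fintype_card, ← Set.ncard_univ]
          exact Set.ncard_le_ncard (Set.subset_univ _) (Set.toFinite _)
        rw [hNBcard v] at h1
        omega
      have hB : ∀ u : V, u ∈ NB G v →
          misCount (SimpleGraph.induce ((NB G u)ᶜ : Set V) G) ≤ ellF (n - d - 1) := by
        intro u _
        haveI : Fintype ((NB G u)ᶜ : Set V) := Fintype.ofFinite _
        have hk : Fintype.card ((NB G u)ᶜ : Set V) = n - ((G.neighborSet u).ncard + 1) := by
          rw [← Nat.card_eq_fintype_card]; exact hcompl u
        have hklt : n - ((G.neighborSet u).ncard + 1) < n := by omega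
        have h1 := IH _ hklt (SimpleGraph.induce ((NB G u)ᶜ : Set V) G) hk
        refine le_trans h1 (ellF_mono ?_)
        have := hmin u (Finset.mem_univ u)
        omega
      calc misCount G ≤ (NB G v).ncard * ellF (n - d - 1) := misCount_le_mul G v _ hB
        _ = (d + 1) * ellF (n - d - 1) := by rw [hNBcard v]
        _ ≤ ell n := mul_ellF_le hpos hdn
        _ = ellF n := by rw [ellF, if_neg hpos.ne']

end Graph

/-- If a graph on `n ≥ 3` vertices has a vertex of degree `1`, then `m(G) ≤ 2·ell (n−2)`. -/
theorem misCount_le_of_degree_one {V : Type*} [Fintype V] (G : SimpleGraph V) (n : ℕ)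
    (hn : Fintype.card V = n) (hn3 : 3 ≤ n) (hv : ∃ v : V, (G.neighborSet v).ncard = 1) :
    misCount G ≤ 2 * ell (n - 2) := by
  obtain ⟨v, hv1⟩ := hv
  obtain ⟨w, hw⟩ := Set.ncard_eq_one.1 hv1
  have hadj : G.Adj v w := by
    rw [← SimpleGraph.mem_neighborSet, hw]
    exact Set.mem_singleton w
  have hvw : v ≠ w := G.ne_of_adj hadj
  have hNBv : NB G v = {v, w} := by rw [NB, hw]
  have hNBvcard : (NB G v).ncard = 2 := by rw [hNBv]; exact Set.ncard_pair hvw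
  have hB : ∀ u : V, u ∈ NB G v →
      misCount (SimpleGraph.induce ((NB G u)ᶜ : Set V) G) ≤ ell (n - 2) := by
    intro u hu
    have h2 : 2 ≤ (NB G u).ncard := by
      rcases Set.mem_insert_iff.1 hu with rfl | hu
      · rw [hNBvcard]
      · have hadju : G.Adj v u := hu
        have hsub : ({u, v} : Set V) ⊆ NB G u := by
          rintro x (rfl | rfl)
          · exact Set.mem_insert _ _
          · exact Set.mem_insert_of_mem _ (G.adj_symm hadju)
        have hpair : ({u, v} : Set V).ncard = 2 := Set.ncard_pair (G.ne_of_adj hadju).symm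
        rw [← hpair]
        exact Set.ncard_le_ncard hsub (Set.toFinite _)
    haveI : Fintype ((NB G u)ᶜ : Set V) := Fintype.ofFinite _
    have hcompl : Fintype.card ((NB G u)ᶜ : Set V) = n - (NB G u).ncard := by
      have h1 := Set.ncard_add_ncard_compl (NB G u)
      rw [Nat.card_eq_fintype_card, hn] at h1
      rw [← Nat.card_eq_fintype_card, Nat.card_coe_set_eq]
      omega
    have h1 := moonMoser _ (SimpleGraph.induce ((NB G u)ᶜ : Set V) G) rfl
    rw [hcompl] at h1
    refine le_trans h1 (le_trans (ellF_mono (by omega : n - (NB G u).ncard ≤ n - 2)) (le_of_eq ?_))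
    simp only [ellF, if_neg (show ¬ n - 2 = 0 by omega)]
  calc misCount G ≤ (NB G v).ncard * ell (n - 2) := misCount_le_mul G v _ hB
    _ = 2 * ell (n - 2) := by rw [hNBvcard]
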